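/- arXiv:2101.04715 — 6 statements merged into one kernel-verified Lean document; each statement's English description precedes it below -/
import Mathlib

section
/- Let $\operatorname{CP}(\lambda, \zeta)$ denote a compound Poisson distribution with arrival rate $\lambda > 0$ and increment distribution $\zeta$ supported on positive integers. Then for rates $\lambda_1, \lambda_2 > 0$ and increment distributions $\zeta_1, \zeta_2$, $d_{TV}(\operatorname{CP}(\lambda_1,\zeta_1), \operatorname{CP}(\lambda_2,\zeta_2)) \leq \min\{\lambda_1,\lambda_2\}\, d_{TV}(\zeta_1,\zeta_2) + d_{TV}(\operatorname{Pois}(\lambda_1), \operatorname{Pois}(\lambda_2))$. -/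
/-!
Write `‖p - q‖` for the total variation distance `∑ₓ (p x - q x)⁺`. Mixing is a contraction:
`‖p.bind κ₁ - q.bind κ₂‖ ≤ ∑ₐ p a ‖κ₁ a - κ₂ a‖ + ‖p - q‖`. Applied to the recursion of the
`n`-fold convolution this gives `‖ζ₁^{*n} - ζ₂^{*n}‖ ≤ n ‖ζ₁ - ζ₂‖`, and applied to the Poisson
mixture defining `CP(λ, ζ)` it gives
`‖CP(λ₁, ζ₁) - CP(λ₂, ζ₂)‖ ≤ E[N] ‖ζ₁ - ζ₂‖ + ‖Pois(λ₁) - Pois(λ₂)‖`, where `N ~ Pois(λ₁)`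
has mean `λ₁`. Exchanging the roles of the two indices gives the factor `min λ₁ λ₂`.
-/

open MeasureTheory ProbabilityTheory
open scoped NNReal

/-- Total variation distance between two probability mass functions on `ℕ`,
defined as the supremum of `|p(A) - q(A)|` over all sets `A ⊆ ℕ`. -/
noncomputable def pmfTVDist (p q : PMF ℕ) : ℝ :=
  ⨆ A : Set ℕ, |(p.toMeasure A).toReal - (q.toMeasure A).toReal|

/-- The `n`-fold convolution of a distribution `ζ` on `ℕ`, i.e. the distribution of the
sum of `n` i.i.d. draws from `ζ`. -/
noncomputable def iterConv (ζ : PMF ℕ) : ℕ → PMF ℕ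
  | 0 => PMF.pure 0
  | n + 1 => (iterConv ζ n).bind fun a => ζ.map fun b => a + b

/-- The compound Poisson distribution `CP(λ, ζ)`: the distribution of `∑_{i=1}^N Z_i` where
`N ~ Pois(λ)` and the `Z_i` are i.i.d. with distribution `ζ`, independent of `N`. -/
noncomputable def compoundPoisson (lam : ℝ≥0) (ζ : PMF ℕ) : PMF ℕ :=
  (poissonPMF lam).bind (iterConv ζ)

open scoped ENNReal

lemma ENNReal.tsum_sub_tsum_le {α : Type*} (f g : α → ℝ≥0∞) :
    ∑' x, f x - ∑' x, g x ≤ ∑' x, (f x - g x) := by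
  rw [tsub_le_iff_right, ← ENNReal.tsum_add]
  exact ENNReal.tsum_le_tsum fun x => le_tsub_add

lemma ENNReal.mul_sub_mul_le (a b c d : ℝ≥0∞) : a * c - b * d ≤ a * (c - d) + (a - b) * d := by
  rw [tsub_le_iff_right]
  calc a * c ≤ a * (c - d + d) := by gcongr; exact le_tsub_add
    _ ≤ a * (c - d) + ((a - b) + b) * d := by rw [mul_add]; gcongr; exact le_tsub_add
    _ = a * (c - d) + (a - b) * d + b * d := by ring

namespace PMF

variable {α β : Type*}

/-- The excess mass of `p` over `q`; since both have mass one, this is the total variation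
distance (without a factor `1/2`). -/
noncomputable def etvDist (p q : PMF α) : ℝ≥0∞ :=
  ∑' x, (p x - q x)

lemma etvDist_le_one (p q : PMF α) : etvDist p q ≤ 1 :=
  (ENNReal.tsum_le_tsum fun _ => tsub_le_self).trans_eq p.tsum_coe

lemma etvDist_ne_top (p q : PMF α) : etvDist p q ≠ ∞ :=
  ne_top_of_le_ne_top ENNReal.one_ne_top (etvDist_le_one p q)

@[simp]
lemma etvDist_self (p : PMF α) : etvDist p p = 0 := by
  simp [etvDist]

lemma etvDist_add_tsum_min (p q : PMF α) : etvDist p q + ∑' x, min (p x) (q x) = 1 := by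
  rw [etvDist, ← ENNReal.tsum_add]
  simp only [tsub_add_min, p.tsum_coe]

lemma etvDist_comm (p q : PMF α) : etvDist p q = etvDist q p := by
  have hmin : ∑' x, min (p x) (q x) ≠ ∞ :=
    ne_top_of_le_ne_top ENNReal.one_ne_top
      ((ENNReal.tsum_le_tsum fun x => min_le_left _ _).trans_eq p.tsum_coe)
  rw [← ENNReal.add_left_inj hmin, etvDist_add_tsum_min]
  simp_rw [min_comm (p _)]
  rw [etvDist_add_tsum_min]

lemma etvDist_bind_le (p q : PMF α) (κ₁ κ₂ : α → PMF β) :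
    etvDist (p.bind κ₁) (q.bind κ₂) ≤ ∑' a, p a * etvDist (κ₁ a) (κ₂ a) + etvDist p q := by
  calc etvDist (p.bind κ₁) (q.bind κ₂)
      ≤ ∑' x, ∑' a, (p a * (κ₁ a x - κ₂ a x) + (p a - q a) * κ₂ a x) := by
        refine ENNReal.tsum_le_tsum fun x => ?_
        rw [bind_apply, bind_apply]
        exact (ENNReal.tsum_sub_tsum_le _ _).trans
          (ENNReal.tsum_le_tsum fun a => ENNReal.mul_sub_mul_le _ _ _ _)
    _ = ∑' a, p a * etvDist (κ₁ a) (κ₂ a) + etvDist p q := by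
        simp only [ENNReal.tsum_comm (α := β), ENNReal.tsum_add, ENNReal.tsum_mul_left,
          tsum_coe, mul_one, etvDist]

lemma etvDist_map_le (f : α → β) (p q : PMF α) : etvDist (p.map f) (q.map f) ≤ etvDist p q := by
  simpa only [bind_pure_comp, Function.comp_apply, etvDist_self, mul_zero, tsum_zero, zero_add]
    using etvDist_bind_le p q (pure ∘ f) (pure ∘ f)

section Measure

variable [MeasurableSpace α] [DiscreteMeasurableSpace α]

lemma toMeasure_le_add_etvDist (p q : PMF α) (s : Set α) :
    p.toMeasure s ≤ q.toMeasure s + etvDist p q := by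
  rw [toMeasure_apply _ .of_discrete, toMeasure_apply _ .of_discrete, etvDist,
    ← ENNReal.tsum_add]
  refine ENNReal.tsum_le_tsum fun x => ?_
  by_cases hx : x ∈ s <;> simp [hx, le_add_tsub]

lemma toMeasure_eq_add_etvDist (p q : PMF α) :
    p.toMeasure {x | q x ≤ p x} = q.toMeasure {x | q x ≤ p x} + etvDist p q := by
  rw [toMeasure_apply _ .of_discrete, toMeasure_apply _ .of_discrete, etvDist,
    ← ENNReal.tsum_add]
  refine tsum_congr fun x => ?_
  by_cases hx : q x ≤ p x
  · simp [hx, add_tsub_cancel_of_le hx]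
  · simp [hx, tsub_eq_zero_of_le (le_of_not_ge hx)]

end Measure

end PMF

open PMF

lemma ENNReal.toReal_sub_toReal_le_of_le_add {a b d : ℝ≥0∞} (h : a ≤ b + d) (hb : b ≠ ∞)
    (hd : d ≠ ∞) :
    a.toReal - b.toReal ≤ d.toReal :=
  sub_le_iff_le_add'.2 (ENNReal.toReal_le_add h hb hd)

lemma pmfTVDist_eq_toReal_etvDist (p q : PMF ℕ) : pmfTVDist p q = (etvDist p q).toReal := by
  have hbound : ∀ A, |(p.toMeasure A).toReal - (q.toMeasure A).toReal| ≤ (etvDist p q).toReal :=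
    fun A => abs_sub_le_iff.2
      ⟨ENNReal.toReal_sub_toReal_le_of_le_add (toMeasure_le_add_etvDist p q A)
          (measure_ne_top _ _) (etvDist_ne_top _ _),
        etvDist_comm p q ▸ ENNReal.toReal_sub_toReal_le_of_le_add (toMeasure_le_add_etvDist q p A)
          (measure_ne_top _ _) (etvDist_ne_top _ _)⟩
  refine le_antisymm (ciSup_le hbound) ?_
  have hattained : (etvDist p q).toReal =
      |(p.toMeasure {x | q x ≤ p x}).toReal - (q.toMeasure {x | q x ≤ p x}).toReal| := by
    rw [toMeasure_eq_add_etvDist, ENNReal.toReal_add (measure_ne_top _ _) (etvDist_ne_top _ _),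
      add_sub_cancel_left, abs_of_nonneg ENNReal.toReal_nonneg]
  rw [hattained]
  exact le_ciSup ⟨_, Set.forall_mem_range.2 hbound⟩ _

lemma pmfTVDist_comm (p q : PMF ℕ) : pmfTVDist p q = pmfTVDist q p := by
  simp only [pmfTVDist, abs_sub_comm]

lemma etvDist_iterConv_le (ζ₁ ζ₂ : PMF ℕ) (n : ℕ) :
    etvDist (iterConv ζ₁ n) (iterConv ζ₂ n) ≤ n * etvDist ζ₁ ζ₂ := by
  induction n with
  | zero => simp [iterConv]
  | succ n ih =>
    calc etvDist (iterConv ζ₁ (n + 1)) (iterConv ζ₂ (n + 1))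
        ≤ ∑' a, iterConv ζ₁ n a * etvDist (ζ₁.map (a + ·)) (ζ₂.map (a + ·)) +
            etvDist (iterConv ζ₁ n) (iterConv ζ₂ n) := etvDist_bind_le _ _ _ _
      _ ≤ ∑' a, iterConv ζ₁ n a * etvDist ζ₁ ζ₂ + n * etvDist ζ₁ ζ₂ := by
        gcongr with a
        exact etvDist_map_le _ _ _
      _ = (n + 1 : ℕ) * etvDist ζ₁ ζ₂ := by
        rw [ENNReal.tsum_mul_right, tsum_coe, Nat.cast_succ]
        ring

lemma poissonPMF_succ_mul (r : ℝ≥0) (n : ℕ) :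
    poissonPMF r (n + 1) * (n + 1 : ℕ) = r * poissonPMF r n := by
  rw [← poissonPMFReal_ofReal_eq_poissonPMF, ← poissonPMFReal_ofReal_eq_poissonPMF,
    ← ENNReal.ofReal_natCast, ← ENNReal.ofReal_coe_nnreal]
  simp only [poissonPMFReal]
  rw [← ENNReal.ofReal_mul (by positivity), ← ENNReal.ofReal_mul (by positivity)]
  congr 1
  rw [Nat.factorial_succ]
  push_cast
  field_simp
  ring

lemma tsum_poissonPMF_mul_cast (r : ℝ≥0) : ∑' n : ℕ, poissonPMF r n * n = r := by
  rw [tsum_eq_zero_add' ENNReal.summable]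
  simp only [Nat.cast_zero, mul_zero, zero_add]
  simp_rw [poissonPMF_succ_mul, ENNReal.tsum_mul_left, tsum_coe, mul_one]

lemma etvDist_compoundPoisson_le (lam₁ lam₂ : ℝ≥0) (ζ₁ ζ₂ : PMF ℕ) :
    etvDist (compoundPoisson lam₁ ζ₁) (compoundPoisson lam₂ ζ₂) ≤
      lam₁ * etvDist ζ₁ ζ₂ + etvDist (poissonPMF lam₁) (poissonPMF lam₂) :=
  calc etvDist (compoundPoisson lam₁ ζ₁) (compoundPoisson lam₂ ζ₂)
      ≤ ∑' n, poissonPMF lam₁ n * etvDist (iterConv ζ₁ n) (iterConv ζ₂ n) +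
          etvDist (poissonPMF lam₁) (poissonPMF lam₂) := etvDist_bind_le _ _ _ _
    _ ≤ ∑' n : ℕ, poissonPMF lam₁ n * (n * etvDist ζ₁ ζ₂) +
          etvDist (poissonPMF lam₁) (poissonPMF lam₂) := by
        gcongr with n
        exact etvDist_iterConv_le _ _ _
    _ = lam₁ * etvDist ζ₁ ζ₂ + etvDist (poissonPMF lam₁) (poissonPMF lam₂) := by
        simp_rw [← mul_assoc, ENNReal.tsum_mul_right, tsum_poissonPMF_mul_cast]

lemma pmfTVDist_compoundPoisson_le (lam₁ lam₂ : ℝ≥0) (ζ₁ ζ₂ : PMF ℕ) :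
    pmfTVDist (compoundPoisson lam₁ ζ₁) (compoundPoisson lam₂ ζ₂) ≤
      lam₁ * pmfTVDist ζ₁ ζ₂ + pmfTVDist (poissonPMF lam₁) (poissonPMF lam₂) := by
  simp only [pmfTVDist_eq_toReal_etvDist]
  have h := ENNReal.toReal_le_add (etvDist_compoundPoisson_le lam₁ lam₂ ζ₁ ζ₂)
    (ENNReal.mul_ne_top ENNReal.coe_ne_top (etvDist_ne_top _ _)) (etvDist_ne_top _ _)
  rwa [ENNReal.toReal_mul, ENNReal.coe_toReal] at h

theorem stmt_2_general (lam₁ lam₂ : ℝ≥0)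
    (ζ₁ ζ₂ : PMF ℕ) :
    pmfTVDist (compoundPoisson lam₁ ζ₁) (compoundPoisson lam₂ ζ₂) ≤
      min (lam₁ : ℝ) (lam₂ : ℝ) * pmfTVDist ζ₁ ζ₂ +
        pmfTVDist (poissonPMF lam₁) (poissonPMF lam₂) := by
  rcases le_total (lam₁ : ℝ) lam₂ with h | h
  · rw [min_eq_left h]
    exact pmfTVDist_compoundPoisson_le lam₁ lam₂ ζ₁ ζ₂
  · rw [min_eq_right h, pmfTVDist_comm (compoundPoisson _ _), pmfTVDist_comm ζ₁,
      pmfTVDist_comm (poissonPMF _)]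
    exact pmfTVDist_compoundPoisson_le lam₂ lam₁ ζ₂ ζ₁

/-- Lemma: `d_TV(CP(λ₁,ζ₁), CP(λ₂,ζ₂)) ≤ min{λ₁,λ₂} d_TV(ζ₁,ζ₂) + d_TV(Pois(λ₁), Pois(λ₂))`,
for increment distributions `ζ₁, ζ₂` supported on the positive integers. -/
theorem stmt_2 (lam₁ lam₂ : ℝ≥0) (h₁ : 0 < lam₁) (h₂ : 0 < lam₂)
    (ζ₁ ζ₂ : PMF ℕ) (hζ₁ : ζ₁ 0 = 0) (hζ₂ : ζ₂ 0 = 0) :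
    pmfTVDist (compoundPoisson lam₁ ζ₁) (compoundPoisson lam₂ ζ₂) ≤
      min (lam₁ : ℝ) (lam₂ : ℝ) * pmfTVDist ζ₁ ζ₂ +
        pmfTVDist (poissonPMF lam₁) (poissonPMF lam₂) :=
  stmt_2_general lam₁ lam₂ ζ₁ ζ₂
end

section
/- Let $x_1, x_2$ be unit vectors in $\mathbb{R}^n$ and let $D \in \mathbb{R}^{n \times n}$ be invertible with largest and smallest singular values $S_{\max}(D)$ and $S_{\min}(D)$. Define $w_i = D x_i / \|D x_i\|_2$ for $i = 1, 2$. Then $\frac{S_{\min}(D)}{S_{\max}(D)} \|x_1 - x_2\|_2 \leq \|w_1 - w_2\|_2 \leq \frac{S_{\max}(D)}{S_{\min}(D)} \|x_1 - x_2\|_2$. -/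
/-!
For nonzero `u, v` in a real inner product space, with `û = ‖u‖⁻¹ • u`,
`‖u - v‖² = (‖u‖ - ‖v‖)² + ‖u‖ ‖v‖ ‖û - v̂‖²`, so normalization enlarges distances by at most
the factor `1 / min (‖u‖, ‖v‖)`. For a unit vector `x`, `‖D x‖ ≥ S_min(D)`, whence
`‖w₁ - w₂‖ ≤ S_min(D)⁻¹ ‖D x₁ - D x₂‖ ≤ (S_max(D) / S_min(D)) ‖x₁ - x₂‖`. The lower bound is the
upper bound for `D⁻¹` applied to `w₁, w₂`, because normalizing `D⁻¹ wᵢ` gives back `xᵢ`.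
-/

open scoped Matrix

/-- Largest singular value of a real matrix: the operator norm of the induced map on
Euclidean space. -/
noncomputable def Smax {n : ℕ} (D : Matrix (Fin n) (Fin n) ℝ) : ℝ :=
  ‖Matrix.toEuclideanCLM (𝕜 := ℝ) D‖

/-- Smallest singular value of a real matrix: the reciprocal of the operator norm of
the induced map of the inverse matrix. -/
noncomputable def Smin {n : ℕ} (D : Matrix (Fin n) (Fin n) ℝ) : ℝ :=
  ‖Matrix.toEuclideanCLM (𝕜 := ℝ) D⁻¹‖⁻¹

/-- The normalization `D x / ‖D x‖` of the image of `x` under `D`. -/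
noncomputable def normalizeImg {n : ℕ} (D : Matrix (Fin n) (Fin n) ℝ)
    (x : EuclideanSpace ℝ (Fin n)) : EuclideanSpace ℝ (Fin n) :=
  ‖Matrix.toEuclideanCLM (𝕜 := ℝ) D x‖⁻¹ • Matrix.toEuclideanCLM (𝕜 := ℝ) D x

theorem inv_norm_smul_smul_eq_self {E : Type*} [NormedAddCommGroup E] [NormedSpace ℝ E]
    {c : ℝ} {x : E} (hc : 0 < c) (hx : ‖x‖ = 1) : ‖c • x‖⁻¹ • c • x = x := by
  rw [norm_smul, hx, mul_one, Real.norm_of_nonneg hc.le, smul_smul, inv_mul_cancel₀ hc.ne',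
    one_smul]

section InnerProductSpace

variable {E F : Type*} [NormedAddCommGroup E] [InnerProductSpace ℝ E]
  [NormedAddCommGroup F] [InnerProductSpace ℝ F]

theorem norm_sub_sq_eq_sq_sub_add_mul_norm_inv_norm_smul_sub_sq {u v : E} (hu : u ≠ 0)
    (hv : v ≠ 0) :
    ‖u - v‖ ^ 2 = (‖u‖ - ‖v‖) ^ 2 + ‖u‖ * ‖v‖ * ‖‖u‖⁻¹ • u - ‖v‖⁻¹ • v‖ ^ 2 := by
  have hu' : ‖u‖ ≠ 0 := norm_ne_zero_iff.mpr hu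
  have hv' : ‖v‖ ≠ 0 := norm_ne_zero_iff.mpr hv
  rw [norm_sub_sq_real, norm_sub_sq_real, real_inner_smul_left, real_inner_smul_right,
    norm_smul, norm_smul, norm_inv, norm_inv, norm_norm, norm_norm]
  field_simp
  ring

theorem mul_norm_inv_norm_smul_sub_le {u v : E} {c : ℝ} (hc : 0 ≤ c) (hu : c ≤ ‖u‖)
    (hv : c ≤ ‖v‖) : c * ‖‖u‖⁻¹ • u - ‖v‖⁻¹ • v‖ ≤ ‖u - v‖ := by
  obtain rfl | hc := hc.eq_or_lt
  · simp
  have hu0 : u ≠ 0 := norm_pos_iff.mp (hc.trans_le hu)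
  have hv0 : v ≠ 0 := norm_pos_iff.mp (hc.trans_le hv)
  have hcc : c * c ≤ ‖u‖ * ‖v‖ := mul_le_mul hu hv hc.le (norm_nonneg u)
  rw [← pow_le_pow_iff_left₀ (by positivity) (norm_nonneg _) two_ne_zero,
    norm_sub_sq_eq_sq_sub_add_mul_norm_inv_norm_smul_sub_sq hu0 hv0, mul_pow, sq c]
  nlinarith [sq_nonneg (‖u‖ - ‖v‖), sq_nonneg ‖‖u‖⁻¹ • u - ‖v‖⁻¹ • v‖]

namespace ContinuousLinearEquiv

variable (e : E ≃L[ℝ] F) {x y : E}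

theorem norm_inv_norm_smul_apply_sub_le (hx : ‖x‖ = 1) (hy : ‖y‖ = 1) :
    ‖‖e x‖⁻¹ • e x - ‖e y‖⁻¹ • e y‖ ≤
      ‖(e : E →L[ℝ] F)‖ * ‖(e.symm : F →L[ℝ] E)‖ * ‖x - y‖ := by
  have one_le_mul (z : E) (hz : ‖z‖ = 1) : 1 ≤ ‖(e.symm : F →L[ℝ] E)‖ * ‖e z‖ := by
    simpa [hz] using (e.symm : F →L[ℝ] E).le_opNorm (e z)
  have hsymm : 0 < ‖(e.symm : F →L[ℝ] E)‖ :=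
    pos_of_mul_pos_left (one_pos.trans_le (one_le_mul x hx)) (norm_nonneg _)
  have lower (z : E) (hz : ‖z‖ = 1) : ‖(e.symm : F →L[ℝ] E)‖⁻¹ ≤ ‖e z‖ :=
    (inv_le_iff_one_le_mul₀' hsymm).mpr (one_le_mul z hz)
  calc ‖‖e x‖⁻¹ • e x - ‖e y‖⁻¹ • e y‖
      = ‖(e.symm : F →L[ℝ] E)‖ *
          (‖(e.symm : F →L[ℝ] E)‖⁻¹ * ‖‖e x‖⁻¹ • e x - ‖e y‖⁻¹ • e y‖) := by
        field_simp
    _ ≤ ‖(e.symm : F →L[ℝ] E)‖ * ‖e x - e y‖ := by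
        gcongr
        exact mul_norm_inv_norm_smul_sub_le (by positivity) (lower x hx) (lower y hy)
    _ ≤ ‖(e.symm : F →L[ℝ] E)‖ * (‖(e : E →L[ℝ] F)‖ * ‖x - y‖) := by
        gcongr
        rw [← map_sub]
        exact (e : E →L[ℝ] F).le_opNorm (x - y)
    _ = ‖(e : E →L[ℝ] F)‖ * ‖(e.symm : F →L[ℝ] E)‖ * ‖x - y‖ := by ring

theorem norm_sub_le_norm_inv_norm_smul_apply_sub (hx : ‖x‖ = 1) (hy : ‖y‖ = 1) :
    ‖x - y‖ ≤
      ‖(e : E →L[ℝ] F)‖ * ‖(e.symm : F →L[ℝ] E)‖ * ‖‖e x‖⁻¹ • e x - ‖e y‖⁻¹ • e y‖ := by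
  have ne_zero (z : E) (hz : ‖z‖ = 1) : e z ≠ 0 :=
    e.map_ne_zero_iff.mpr (norm_ne_zero_iff.mp (hz ▸ one_ne_zero))
  have normalize_symm (z : E) (hz : ‖z‖ = 1) :
      ‖e.symm (‖e z‖⁻¹ • e z)‖⁻¹ • e.symm (‖e z‖⁻¹ • e z) = z := by
    have hz₀ := ne_zero z hz
    rw [map_smul, e.symm_apply_apply]
    exact inv_norm_smul_smul_eq_self (by positivity) hz
  have hxy := e.symm.norm_inv_norm_smul_apply_sub_le (x := ‖e x‖⁻¹ • e x)
    (y := ‖e y‖⁻¹ • e y) (norm_smul_inv_norm (𝕜 := ℝ) (ne_zero x hx))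
    (norm_smul_inv_norm (𝕜 := ℝ) (ne_zero y hy))
  rwa [normalize_symm x hx, normalize_symm y hy, symm_symm,
    mul_comm ‖(e.symm : F →L[ℝ] E)‖] at hxy

end ContinuousLinearEquiv

end InnerProductSpace

namespace Matrix

variable {𝕜 ι : Type*} [RCLike 𝕜] [Fintype ι] [DecidableEq ι]

noncomputable def toEuclideanCLEquiv (D : Matrix ι ι 𝕜) (hD : IsUnit D) :
    EuclideanSpace 𝕜 ι ≃L[𝕜] EuclideanSpace 𝕜 ι :=
  have hdet : IsUnit D.det := (isUnit_iff_isUnit_det D).mp hD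
  .equivOfInverse (toEuclideanCLM (n := ι) (𝕜 := 𝕜) D) (toEuclideanCLM (n := ι) (𝕜 := 𝕜) D⁻¹)
    (fun x ↦ by rw [← mul_apply_eq_comp, ← map_mul, nonsing_inv_mul D hdet,
      map_one, one_apply_eq_self])
    (fun x ↦ by rw [← mul_apply_eq_comp, ← map_mul, mul_nonsing_inv D hdet,
      map_one, one_apply_eq_self])

end Matrix

/-- Lemma: for unit vectors `x₁, x₂` and an invertible matrix `D`, with `wᵢ = Dxᵢ/‖Dxᵢ‖`,
`(S_min(D)/S_max(D)) ‖x₁ - x₂‖ ≤ ‖w₁ - w₂‖ ≤ (S_max(D)/S_min(D)) ‖x₁ - x₂‖`. -/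
theorem stmt_10 {n : ℕ} (D : Matrix (Fin n) (Fin n) ℝ) (hD : IsUnit D)
    (x₁ x₂ : EuclideanSpace ℝ (Fin n)) (hx₁ : ‖x₁‖ = 1) (hx₂ : ‖x₂‖ = 1) :
    Smin D / Smax D * ‖x₁ - x₂‖ ≤ ‖normalizeImg D x₁ - normalizeImg D x₂‖ ∧
      ‖normalizeImg D x₁ - normalizeImg D x₂‖ ≤ Smax D / Smin D * ‖x₁ - x₂‖ := by
  set e := D.toEuclideanCLEquiv hD
  have hSmax : Smax D = ‖(e : EuclideanSpace ℝ (Fin n) →L[ℝ] EuclideanSpace ℝ (Fin n))‖ := rfl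
  have hSmin : Smin D = ‖(e.symm : EuclideanSpace ℝ (Fin n) →L[ℝ] EuclideanSpace ℝ (Fin n))‖⁻¹ :=
    rfl
  have hw (x) : normalizeImg D x = ‖e x‖⁻¹ • e x := rfl
  rw [hSmax, hSmin, hw, hw, div_inv_eq_mul, inv_div_left]
  exact ⟨inv_mul_le_of_le_mul₀ (by positivity) (norm_nonneg _)
      (e.norm_sub_le_norm_inv_norm_smul_apply_sub hx₁ hx₂),
    e.norm_inv_norm_smul_apply_sub_le hx₁ hx₂⟩
end

section
/- Let $n \geq 4$ and define $P_n(r) = \frac{b_n}{2} \int_{1 - r^2/2}^{1} (1 - u^2)^{(n-4)/2}\, du$ for $r \in [0, \sqrt{2}]$, where $b_n = \frac{2\Gamma((n-1)/2)}{\sqrt{\pi}\,\Gamma((n-2)/2)}$, and $a_n = \frac{b_n}{2(n-2)}$. Then for all $r \in (0, \sqrt{2}]$, $a_n r^{n-2}\left(1 - \frac{r^2}{4}\right)^{(n-4)/2} \leq P_n(r) \leq a_n r^{n-2}$. -/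
/-!
On `[1 - r²/2, 1]` write `1 - u² = (1 + u)(1 - u)` with `2 - r²/2 ≤ 1 + u ≤ 2`. This
squeezes the integrand between `(2 - r²/2)^α (1 - u)^α` and `2^α (1 - u)^α`, `α = (n - 4)/2`,
and `∫ (1 - u)^α = (r²/2)^(α+1) / (α + 1)` is explicit; `a_n` is exactly the constant for which
`(b_n / 2) · 2^α (r²/2)^(α+1) / (α + 1) = a_n r^(n-2)`.
-/

/-- The constant `b_n = 2Γ((n-1)/2) / (√π Γ((n-2)/2))`. -/
noncomputable def bCoef (n : ℕ) : ℝ :=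
  2 * Real.Gamma (((n : ℝ) - 1) / 2) / (Real.sqrt Real.pi * Real.Gamma (((n : ℝ) - 2) / 2))

/-- The constant `a_n = b_n / (2(n-2))`. -/
noncomputable def aCoef (n : ℕ) : ℝ := bCoef n / (2 * ((n : ℝ) - 2))

/-- The normalized spherical cap area
`P_n(r) = (b_n/2) ∫_{1 - r²/2}^1 (1 - u²)^{(n-4)/2} du` (for `0 ≤ r ≤ √2`). -/
noncomputable def capArea (n : ℕ) (r : ℝ) : ℝ :=
  bCoef n / 2 * ∫ u in (1 - r ^ 2 / 2)..1, (1 - u ^ 2) ^ (((n : ℝ) - 4) / 2)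

open Real intervalIntegral

lemma integral_one_sub_rpow {α : ℝ} (hα : -1 < α) (a : ℝ) :
    ∫ u in a..1, (1 - u) ^ α = (1 - a) ^ (α + 1) / (α + 1) := by
  rw [integral_comp_sub_left (fun x : ℝ => x ^ α) 1, sub_self, integral_rpow (Or.inl hα),
    zero_rpow (by linarith)]
  ring

lemma one_sub_sq_rpow_bounds {α a u : ℝ} (hα : 0 ≤ α) (ha : -1 ≤ a)
    (hu : u ∈ Set.Icc a 1) :
    (1 + a) ^ α * (1 - u) ^ α ≤ (1 - u ^ 2) ^ α ∧
      (1 - u ^ 2) ^ α ≤ 2 ^ α * (1 - u) ^ α := by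
  obtain ⟨hau, hu₁⟩ := hu
  have hfactor : (1 - u ^ 2) ^ α = (1 + u) ^ α * (1 - u) ^ α := by
    rw [← mul_rpow (by linarith) (by linarith)]
    ring_nf
  rw [hfactor]
  exact ⟨mul_le_mul_of_nonneg_right (rpow_le_rpow (by linarith) (by linarith) hα)
      (rpow_nonneg (by linarith) α),
    mul_le_mul_of_nonneg_right (rpow_le_rpow (by linarith) (by linarith) hα)
      (rpow_nonneg (by linarith) α)⟩

theorem integral_one_sub_sq_rpow_bounds {α a : ℝ} (hα : 0 ≤ α) (ha : a ∈ Set.Icc (-1) 1) :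
    (1 + a) ^ α * ((1 - a) ^ (α + 1) / (α + 1)) ≤ ∫ u in a..1, (1 - u ^ 2) ^ α ∧
      ∫ u in a..1, (1 - u ^ 2) ^ α ≤ 2 ^ α * ((1 - a) ^ (α + 1) / (α + 1)) := by
  obtain ⟨ha₀, ha₁⟩ := ha
  have hf : Continuous fun u : ℝ => (1 - u ^ 2) ^ α := by fun_prop (disch := exact Or.inr hα)
  have hg : Continuous fun u : ℝ => (1 - u) ^ α := by fun_prop (disch := exact Or.inr hα)
  rw [← integral_one_sub_rpow (by linarith) a, ← integral_const_mul, ← integral_const_mul]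
  have hbounds := fun u (hu : u ∈ Set.Icc a 1) => one_sub_sq_rpow_bounds hα ha₀ hu
  exact ⟨integral_mono_on ha₁ ((hg.const_mul _).intervalIntegrable _ _)
      (hf.intervalIntegrable _ _) fun u hu => (hbounds u hu).1,
    integral_mono_on ha₁ (hf.intervalIntegrable _ _)
      ((hg.const_mul _).intervalIntegrable _ _) fun u hu => (hbounds u hu).2⟩

lemma bCoef_pos {n : ℕ} (hn : 3 ≤ n) : 0 < bCoef n := by
  have hn' : (3 : ℝ) ≤ n := by exact_mod_cast hn
  have := Gamma_pos_of_pos (s := ((n : ℝ) - 1) / 2) (by linarith)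
  have := Gamma_pos_of_pos (s := ((n : ℝ) - 2) / 2) (by linarith)
  have := sqrt_pos.mpr pi_pos
  unfold bCoef
  positivity

lemma aCoef_mul_pow_eq {n : ℕ} (hn : 3 ≤ n) {r : ℝ} (hr : 0 ≤ r) :
    aCoef n * r ^ (n - 2) =
      bCoef n / 2 * (2 ^ (((n : ℝ) - 4) / 2) *
        ((r ^ 2 / 2) ^ (((n : ℝ) - 4) / 2 + 1) / (((n : ℝ) - 4) / 2 + 1))) := by
  have hn' : (3 : ℝ) ≤ n := by exact_mod_cast hn
  have hexp : ((n : ℝ) - 4) / 2 + 1 = ((n - 2 : ℕ) : ℝ) / 2 := by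
    rw [Nat.cast_sub (by omega)]; push_cast; ring
  have h2 : (2 : ℝ) ^ (((n - 2 : ℕ) : ℝ) / 2) = 2 ^ (((n : ℝ) - 4) / 2) * 2 := by
    rw [← hexp, rpow_add_one two_ne_zero]
  rw [hexp, div_rpow (sq_nonneg r) zero_le_two, rpow_div_two_eq_sqrt _ (sq_nonneg r),
    sqrt_sq hr, rpow_natCast, h2, aCoef, Nat.cast_sub (by omega : 2 ≤ n)]
  have : (2 : ℝ) ^ (((n : ℝ) - 4) / 2) ≠ 0 := by positivity
  have : (n : ℝ) - 2 ≠ 0 := by linarith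
  push_cast
  field_simp

/-- Lemma: for `n ≥ 4` and `0 < r ≤ √2`,
`a_n r^{n-2} (1 - r²/4)^{(n-4)/2} ≤ P_n(r) ≤ a_n r^{n-2}`. -/
theorem stmt_13 (n : ℕ) (hn : 4 ≤ n) (r : ℝ) (hr : 0 < r) (hr2 : r ≤ Real.sqrt 2) :
    aCoef n * r ^ (n - 2) * (1 - r ^ 2 / 4) ^ (((n : ℝ) - 4) / 2) ≤ capArea n r ∧
      capArea n r ≤ aCoef n * r ^ (n - 2) := by
  set α : ℝ := ((n : ℝ) - 4) / 2
  have hα : 0 ≤ α := div_nonneg (sub_nonneg.2 (by exact_mod_cast hn)) zero_le_two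
  have hr_sq : r ^ 2 ≤ 2 := by simpa using pow_le_pow_left₀ hr.le hr2 2
  obtain ⟨hlower, hupper⟩ := integral_one_sub_sq_rpow_bounds hα
    (a := 1 - r ^ 2 / 2) ⟨by linarith, by linarith [sq_nonneg r]⟩
  have hb : 0 ≤ bCoef n / 2 := by have := bCoef_pos (by omega : 3 ≤ n); positivity
  rw [aCoef_mul_pow_eq (by omega) hr.le]
  simp only [sub_sub_cancel] at hlower hupper
  constructor
  · have h1a : 1 + (1 - r ^ 2 / 2) = 2 * (1 - r ^ 2 / 4) := by ring
    rw [h1a, mul_rpow zero_le_two (by linarith)] at hlower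
    calc _ = bCoef n / 2 *
          (2 ^ α * (1 - r ^ 2 / 4) ^ α * ((r ^ 2 / 2) ^ (α + 1) / (α + 1))) := by ring
      _ ≤ capArea n r := mul_le_mul_of_nonneg_left hlower hb
  · exact mul_le_mul_of_nonneg_left hupper hb
end

section
/- Let $n \geq 4$ and $P_n$ be the normalized spherical cap area function with $P_n'(x) = \frac{b_n}{2}x^{n-3}(1-x^2/4)^{(n-4)/2}$ for $0 < x < 2$ and $P_n'(x) = 0$ for $x \geq 2$, $P_n(0) = 0$. Then for $0 \leq \beta < 1 < \alpha$ and $0 < r \leq 2$, $P_n(\alpha r) - P_n(\beta r) \leq (n-2)\, P_n(r)\, \alpha^{n-3} (\alpha - \beta)$. -/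
/-- The normalized spherical cap area `P_n(r)` extended to all `r > 0`:
`P_n(r) = 1 - P_n(√(4 - r²))` for `√2 < r ≤ 2` and `P_n(r) = 1` for `r > 2`. -/
noncomputable def capAreaExt (n : ℕ) (r : ℝ) : ℝ :=
  if r ≤ Real.sqrt 2 then capArea n r
  else if r ≤ 2 then 1 - capArea n (Real.sqrt (4 - r ^ 2))
  else 1

/-!
Substituting `u = 1 - x²/2` turns the cap area into
`P_n(r) = (b_n/2) ∫₀^{min r 2} x^{n-3} (1 - x²/4)^{(n-4)/2} dx`. The fact that `b_n` normalises
the total mass to `1` (a Beta integral and Legendre's duplication formula) is what makes the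
complementary-cap branch on `(√2, 2]` and the constant branch beyond `2` fit this one formula.
Since `(1 - x²/4)^{(n-4)/2}` decreases in `x`, rescaling `x ↦ c x` gives
`P_n(α r) ≤ α^{n-2} P_n(r)` for `α ≥ 1` and `β^{n-2} P_n(r) ≤ P_n(β r)` for `β ≤ 1`, and
`α^{n-2} - β^{n-2} ≤ (n-2) α^{n-3} (α - β)` finishes the estimate.
-/

open Real Set intervalIntegral

theorem integral_rpow_mul_one_sub_rpow {a b : ℝ} (ha : 0 < a) (hb : 0 < b) :
    ∫ t in (0:ℝ)..1, t ^ (a - 1) * (1 - t) ^ (b - 1) = Gamma a * Gamma b / Gamma (a + b) := by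
  have hbeta :
      Complex.betaIntegral a b = ↑(∫ t in (0:ℝ)..1, t ^ (a - 1) * (1 - t) ^ (b - 1)) := by
    rw [Complex.betaIntegral, ← intervalIntegral.integral_ofReal]
    refine integral_congr fun t ht => ?_
    rw [uIcc_of_le zero_le_one] at ht
    simp only [Complex.ofReal_mul, Complex.ofReal_cpow ht.1,
      Complex.ofReal_cpow (sub_nonneg.2 ht.2)]
    push_cast; rfl
  rw [← ProbabilityTheory.beta, ProbabilityTheory.beta_eq_betaIntegralReal a b ha hb, hbeta,
    Complex.ofReal_re]

-- `u = 2t - 1` gives `2 · 4^s · B(s+1, s+1)`, which Legendre duplication simplifies.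
theorem integral_one_sub_sq_rpow {s : ℝ} (hs : -1 < s) :
    ∫ u in (-1:ℝ)..1, (1 - u ^ 2) ^ s = √π * Gamma (s + 1) / Gamma (s + 3 / 2) := by
  have hsub : ∫ t in (0:ℝ)..1, (1 - (2 * t + -1) ^ 2) ^ s
      = 2⁻¹ * ∫ u in (-1:ℝ)..1, (1 - u ^ 2) ^ s := by
    have h := integral_comp_mul_add (fun u : ℝ => (1 - u ^ 2) ^ s) two_ne_zero (-1)
      (a := 0) (b := 1)
    norm_num at h
    rw [h, one_div]
  have hfactor : ∫ t in (0:ℝ)..1, (1 - (2 * t + -1) ^ 2) ^ s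
      = 4 ^ s * ∫ t in (0:ℝ)..1, t ^ (s + 1 - 1) * (1 - t) ^ (s + 1 - 1) := by
    rw [← integral_const_mul]
    refine integral_congr fun t ht => ?_
    rw [uIcc_of_le zero_le_one] at ht
    simp only [add_sub_cancel_right]
    rw [show 1 - (2 * t + -1) ^ 2 = 4 * (t * (1 - t)) by ring,
      mul_rpow zero_le_four (mul_nonneg ht.1 (sub_nonneg.2 ht.2)),
      mul_rpow ht.1 (sub_nonneg.2 ht.2)]
  have hdup := Gamma_mul_Gamma_add_half (s + 1)
  have hpow : (2:ℝ) * 4 ^ s * 2 ^ (1 - 2 * (s + 1)) = 1 := by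
    rw [show (4:ℝ) = 2 ^ (2:ℝ) by norm_num, ← rpow_mul zero_le_two, mul_assoc,
      ← rpow_add two_pos, show 2 * s + (1 - 2 * (s + 1)) = -1 by ring, rpow_neg_one]
    norm_num
  have hΓ1 : 0 < Gamma (s + 1) := Gamma_pos_of_pos (by linarith)
  have hΓ2 : 0 < Gamma (2 * (s + 1)) := Gamma_pos_of_pos (by linarith)
  have hΓ3 : 0 < Gamma (s + 3 / 2) := Gamma_pos_of_pos (by linarith)
  rw [integral_rpow_mul_one_sub_rpow (by linarith) (by linarith), hsub,
    show s + 1 + (s + 1) = 2 * (s + 1) by ring] at hfactor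
  rw [show s + 1 + 1 / 2 = s + 3 / 2 by ring] at hdup
  have hI : ∫ u in (-1:ℝ)..1, (1 - u ^ 2) ^ s
      = 2 * 4 ^ s * Gamma (s + 1) * Gamma (s + 1) / Gamma (2 * (s + 1)) := by
    linear_combination 2 * hfactor
  rw [eq_div_iff hΓ3.ne', hI, div_mul_eq_mul_div, div_eq_iff hΓ2.ne']
  linear_combination (2 * 4 ^ s * Gamma (s + 1)) * hdup
    + (Gamma (s + 1) * Gamma (2 * (s + 1)) * √π) * hpow

theorem integral_mul_comp_one_sub_sq_div_two {g : ℝ → ℝ} (hg : Continuous g) (r : ℝ) :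
    ∫ x in (0:ℝ)..r, x * g (1 - x ^ 2 / 2) = ∫ u in (1 - r ^ 2 / 2)..1, g u := by
  have h := integral_comp_mul_deriv (f := fun x : ℝ => 1 - x ^ 2 / 2) (f' := fun x => -x)
    (a := 0) (b := r) (fun x _ => by simpa using ((hasDerivAt_pow 2 x).div_const 2).const_sub 1)
    (by fun_prop) hg
  norm_num at h
  rw [integral_symm 1, ← h, neg_neg]
  exact integral_congr fun x _ => mul_comm _ _

theorem integral_le_pow_mul_integral_of_comp_mul_le {f : ℝ → ℝ} (hf : Continuous f) {c b : ℝ}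
    {k : ℕ} (hc : 0 ≤ c) (hb : 0 ≤ b) (h : ∀ x ∈ Icc 0 b, f (c * x) ≤ c ^ k * f x) :
    ∫ x in (0:ℝ)..c * b, f x ≤ c ^ (k + 1) * ∫ x in (0:ℝ)..b, f x := by
  calc ∫ x in (0:ℝ)..c * b, f x = c * ∫ x in (0:ℝ)..b, f (c * x) := by
        rw [mul_integral_comp_mul_left, mul_zero]
    _ ≤ c * ∫ x in (0:ℝ)..b, c ^ k * f x := by
      gcongr
      exact integral_mono_on hb (Continuous.intervalIntegrable (by fun_prop) _ _)
        (Continuous.intervalIntegrable (by fun_prop) _ _) h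
    _ = c ^ (k + 1) * ∫ x in (0:ℝ)..b, f x := by rw [integral_const_mul]; ring

theorem pow_mul_integral_le_integral_of_le_comp_mul {f : ℝ → ℝ} (hf : Continuous f) {c b : ℝ}
    {k : ℕ} (hc : 0 ≤ c) (hb : 0 ≤ b) (h : ∀ x ∈ Icc 0 b, c ^ k * f x ≤ f (c * x)) :
    c ^ (k + 1) * ∫ x in (0:ℝ)..b, f x ≤ ∫ x in (0:ℝ)..c * b, f x := by
  calc c ^ (k + 1) * ∫ x in (0:ℝ)..b, f x = c * ∫ x in (0:ℝ)..b, c ^ k * f x := by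
        rw [integral_const_mul]; ring
    _ ≤ c * ∫ x in (0:ℝ)..b, f (c * x) := by
      gcongr
      exact integral_mono_on hb (Continuous.intervalIntegrable (by fun_prop) _ _)
        (Continuous.intervalIntegrable (by fun_prop) _ _) h
    _ = ∫ x in (0:ℝ)..c * b, f x := by rw [mul_integral_comp_mul_left, mul_zero]

theorem pow_sub_pow_le_mul_pow_mul_sub {R : Type*} [CommRing R] [LinearOrder R]
    [IsStrictOrderedRing R] {x y : R} (hy : 0 ≤ y) (hyx : y ≤ x) (m : ℕ) :
    x ^ m - y ^ m ≤ m * x ^ (m - 1) * (x - y) := by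
  have h := abs_pow_sub_pow_le x y m
  rw [max_eq_left (abs_le_abs_of_nonneg hy hyx), abs_of_nonneg (hy.trans hyx),
    abs_of_nonneg (sub_nonneg.2 hyx)] at h
  linarith [le_abs_self (x ^ m - y ^ m)]

theorem continuous_one_sub_sq_rpow {s : ℝ} (hs : 0 ≤ s) :
    Continuous fun u : ℝ => (1 - u ^ 2) ^ s :=
  (continuous_rpow_const hs).comp (by fun_prop)

noncomputable def capDensity (n : ℕ) (x : ℝ) : ℝ :=
  x ^ (n - 3) * (1 - x ^ 2 / 4) ^ (((n : ℝ) - 4) / 2)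

section CapArea

variable {n : ℕ}

theorem bCoef_div_two_mul_integral (hn : 3 ≤ n) :
    bCoef n / 2 * ∫ u in (-1:ℝ)..1, (1 - u ^ 2) ^ (((n : ℝ) - 4) / 2) = 1 := by
  have hs : -1 < ((n:ℝ) - 4) / 2 := by
    have : (3:ℝ) ≤ n := by exact_mod_cast hn
    linarith
  rw [integral_one_sub_sq_rpow hs, bCoef,
    show ((n:ℝ) - 1) / 2 = ((n:ℝ) - 4) / 2 + 3 / 2 by ring,
    show ((n:ℝ) - 2) / 2 = ((n:ℝ) - 4) / 2 + 1 by ring]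
  generalize ((n:ℝ) - 4) / 2 = s at hs ⊢
  have h1 : 0 < Gamma (s + 1) := Gamma_pos_of_pos (by linarith)
  have h2 : 0 < Gamma (s + 3 / 2) := Gamma_pos_of_pos (by linarith)
  have h3 : 0 < √π := sqrt_pos.2 pi_pos
  generalize Gamma (s + 1) = A at h1 ⊢
  generalize Gamma (s + 3 / 2) = B at h2 ⊢
  field_simp

theorem bCoef_div_two_nonneg (hn : 3 ≤ n) : 0 ≤ bCoef n / 2 := by
  have hn' : (3:ℝ) ≤ n := by exact_mod_cast hn
  have h1 : 0 < Gamma (((n:ℝ) - 1) / 2) := Gamma_pos_of_pos (by linarith)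
  have h2 : 0 < Gamma (((n:ℝ) - 2) / 2) := Gamma_pos_of_pos (by linarith)
  have h3 : 0 < √π := sqrt_pos.2 pi_pos
  rw [bCoef]; positivity

theorem sub_four_div_two_nonneg (hn : 4 ≤ n) : 0 ≤ ((n : ℝ) - 4) / 2 := by
  have : (4:ℝ) ≤ n := by exact_mod_cast hn
  linarith

theorem continuous_capDensity (hn : 4 ≤ n) : Continuous (capDensity n) := by
  unfold capDensity
  exact (continuous_pow _).mul
    ((continuous_rpow_const (sub_four_div_two_nonneg hn)).comp (by fun_prop))

theorem capDensity_nonneg {x : ℝ} (hx : 0 ≤ x) (hx2 : x ≤ 2) : 0 ≤ capDensity n x :=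
  mul_nonneg (pow_nonneg hx _) (rpow_nonneg (by nlinarith) _)

theorem capArea_eq_integral_capDensity (hn : 4 ≤ n) {r : ℝ} (hr : 0 ≤ r) (hr2 : r ≤ 2) :
    capArea n r = bCoef n / 2 * ∫ x in (0:ℝ)..r, capDensity n x := by
  rw [capArea, ← integral_mul_comp_one_sub_sq_div_two
    (continuous_one_sub_sq_rpow (sub_four_div_two_nonneg hn))]
  congr 1
  refine integral_congr fun x hx => ?_
  rw [uIcc_of_le hr] at hx
  have hsq : (x ^ 2) ^ (((n : ℝ) - 4) / 2) = x ^ (n - 4) := by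
    rw [← rpow_natCast, ← rpow_mul hx.1, ← rpow_natCast]
    congr 1
    push_cast [Nat.cast_sub hn]
    ring
  unfold capDensity
  rw [show 1 - (1 - x ^ 2 / 2) ^ 2 = x ^ 2 * (1 - x ^ 2 / 4) by ring,
    mul_rpow (sq_nonneg x) (by nlinarith [hx.1, hx.2]), hsq, ← mul_assoc, ← pow_succ',
    show n - 4 + 1 = n - 3 by omega]

theorem capArea_zero : capArea n 0 = 0 := by simp [capArea]

theorem capArea_add_capArea_sqrt_four_sub_sq (hn : 4 ≤ n) {r : ℝ} (hr : r ^ 2 ≤ 4) :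
    capArea n r + capArea n √(4 - r ^ 2) = 1 := by
  set g : ℝ → ℝ := fun u => (1 - u ^ 2) ^ (((n : ℝ) - 4) / 2)
  have hg : ∀ a b, IntervalIntegrable g MeasureTheory.volume a b :=
    (continuous_one_sub_sq_rpow (sub_four_div_two_nonneg hn)).intervalIntegrable
  have hreflect : ∫ u in (1 - r ^ 2 / 2)..1, g u = ∫ u in (-1:ℝ)..-(1 - r ^ 2 / 2), g u := by
    have h := integral_comp_neg (a := 1 - r ^ 2 / 2) (b := 1) g
    simpa only [g, neg_sq] using h
  rw [capArea, capArea, sq_sqrt (by linarith),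
    show 1 - (4 - r ^ 2) / 2 = -(1 - r ^ 2 / 2) by ring, ← mul_add, hreflect,
    integral_add_adjacent_intervals (hg _ _) (hg _ _)]
  exact bCoef_div_two_mul_integral (by omega)

theorem capArea_two (hn : 4 ≤ n) : capArea n 2 = 1 := by
  have h := capArea_add_capArea_sqrt_four_sub_sq hn (r := 2) (by norm_num)
  rwa [show (4:ℝ) - 2 ^ 2 = 0 by norm_num, sqrt_zero, capArea_zero, add_zero] at h

theorem capAreaExt_eq_capArea (hn : 4 ≤ n) {r : ℝ} (hr : 0 ≤ r) (hr2 : r ≤ 2) :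
    capAreaExt n r = capArea n r := by
  unfold capAreaExt
  split_ifs
  · rfl
  · linarith [capArea_add_capArea_sqrt_four_sub_sq hn (r := r) (by nlinarith)]

theorem capAreaExt_eq_capArea_min (hn : 4 ≤ n) {r : ℝ} (hr : 0 ≤ r) :
    capAreaExt n r = capArea n (min r 2) := by
  rcases le_or_gt r 2 with hr2 | hr2
  · rw [min_eq_left hr2, capAreaExt_eq_capArea hn hr hr2]
  · have hsqrt2 : √2 < 2 := by rw [sqrt_lt' two_pos]; norm_num
    rw [min_eq_right hr2.le, capArea_two hn, capAreaExt, if_neg (by linarith),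
      if_neg (by linarith)]

theorem capDensity_mul (c x : ℝ) :
    capDensity n (c * x) =
      c ^ (n - 3) * (x ^ (n - 3) * (1 - (c * x) ^ 2 / 4) ^ (((n : ℝ) - 4) / 2)) := by
  rw [capDensity, mul_pow, mul_assoc]

theorem capDensity_mul_le (hn : 4 ≤ n) {c x : ℝ} (hc : 1 ≤ c) (hx : 0 ≤ x) (hcx : c * x ≤ 2) :
    capDensity n (c * x) ≤ c ^ (n - 3) * capDensity n x := by
  have hxcx : x ≤ c * x := le_mul_of_one_le_left hx hc
  rw [capDensity_mul, capDensity]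
  gcongr
  · nlinarith
  · exact sub_four_div_two_nonneg hn

theorem pow_mul_capDensity_le (hn : 4 ≤ n) {c x : ℝ} (hc0 : 0 ≤ c) (hc1 : c ≤ 1) (hx : 0 ≤ x)
    (hx2 : x ≤ 2) : c ^ (n - 3) * capDensity n x ≤ capDensity n (c * x) := by
  have hcx : c * x ≤ x := mul_le_of_le_one_left hx hc1
  rw [capDensity_mul, capDensity]
  gcongr
  · nlinarith
  · exact sub_four_div_two_nonneg hn

theorem capArea_mul_le (hn : 4 ≤ n) {c r : ℝ} (hc : 1 ≤ c) (hr : 0 ≤ r) (hcr : c * r ≤ 2) :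
    capArea n (c * r) ≤ c ^ (n - 2) * capArea n r := by
  have hr2 : r ≤ 2 := (le_mul_of_one_le_left hr hc).trans hcr
  rw [capArea_eq_integral_capDensity hn (by positivity) hcr,
    capArea_eq_integral_capDensity hn hr hr2, mul_left_comm, show n - 2 = n - 3 + 1 by omega]
  gcongr
  · exact bCoef_div_two_nonneg (by omega)
  · exact integral_le_pow_mul_integral_of_comp_mul_le (continuous_capDensity hn) (by positivity) hr
      fun x hx => capDensity_mul_le hn hc hx.1
        ((mul_le_mul_of_nonneg_left hx.2 (by positivity)).trans hcr)

theorem pow_mul_capArea_le (hn : 4 ≤ n) {c r : ℝ} (hc0 : 0 ≤ c) (hc1 : c ≤ 1) (hr : 0 ≤ r)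
    (hr2 : r ≤ 2) : c ^ (n - 2) * capArea n r ≤ capArea n (c * r) := by
  have hcr : c * r ≤ 2 := (mul_le_of_le_one_left hr hc1).trans hr2
  rw [capArea_eq_integral_capDensity hn (by positivity) hcr,
    capArea_eq_integral_capDensity hn hr hr2, mul_left_comm, show n - 2 = n - 3 + 1 by omega]
  gcongr
  · exact bCoef_div_two_nonneg (by omega)
  · exact pow_mul_integral_le_integral_of_le_comp_mul (continuous_capDensity hn) hc0 hr
      fun x hx => pow_mul_capDensity_le hn hc0 hc1 hx.1 (hx.2.trans hr2)

theorem capArea_monotoneOn (hn : 4 ≤ n) : MonotoneOn (capArea n) (Icc 0 2) := by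
  intro a ha b hb hab
  rw [capArea_eq_integral_capDensity hn ha.1 ha.2, capArea_eq_integral_capDensity hn hb.1 hb.2]
  gcongr
  · exact bCoef_div_two_nonneg (by omega)
  · exact integral_mono_interval le_rfl ha.1 hab
      (MeasureTheory.ae_restrict_of_forall_mem measurableSet_Ioc
        fun x hx => capDensity_nonneg hx.1.le (hx.2.trans hb.2))
      ((continuous_capDensity hn).intervalIntegrable _ _)

theorem capAreaExt_mul_le (hn : 4 ≤ n) {c r : ℝ} (hc : 1 ≤ c) (hr : 0 ≤ r) (hr2 : r ≤ 2) :
    capAreaExt n (c * r) ≤ c ^ (n - 2) * capAreaExt n r := by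
  have hc0 : 0 < c := one_pos.trans_le hc
  -- `capAreaExt` is constant beyond `2`, so only `min r (2 / c)` gets rescaled.
  have hclip : c * min r (2 / c) = min (c * r) 2 := by
    rw [mul_min_of_nonneg _ _ hc0.le, mul_div_cancel₀ _ hc0.ne']
  have hr' : 0 ≤ min r (2 / c) := le_min hr (by positivity)
  rw [capAreaExt_eq_capArea_min hn (by positivity), ← hclip, capAreaExt_eq_capArea hn hr hr2]
  calc capArea n (c * min r (2 / c)) ≤ c ^ (n - 2) * capArea n (min r (2 / c)) :=
        capArea_mul_le hn hc hr' (hclip ▸ min_le_right _ _)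
    _ ≤ c ^ (n - 2) * capArea n r := by
        gcongr
        exact capArea_monotoneOn hn ⟨hr', (min_le_left _ _).trans hr2⟩ ⟨hr, hr2⟩ (min_le_left _ _)

theorem pow_mul_capAreaExt_le (hn : 4 ≤ n) {c r : ℝ} (hc0 : 0 ≤ c) (hc1 : c ≤ 1) (hr : 0 ≤ r)
    (hr2 : r ≤ 2) : c ^ (n - 2) * capAreaExt n r ≤ capAreaExt n (c * r) := by
  rw [capAreaExt_eq_capArea hn hr hr2,
    capAreaExt_eq_capArea hn (by positivity) ((mul_le_of_le_one_left hr hc1).trans hr2)]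
  exact pow_mul_capArea_le hn hc0 hc1 hr hr2

theorem capAreaExt_nonneg (hn : 4 ≤ n) {r : ℝ} (hr : 0 ≤ r) (hr2 : r ≤ 2) :
    0 ≤ capAreaExt n r := by
  rw [capAreaExt_eq_capArea hn hr hr2, ← capArea_zero (n := n)]
  exact capArea_monotoneOn hn ⟨le_rfl, zero_le_two⟩ ⟨hr, hr2⟩ hr

end CapArea

/-- Lemma: for `n ≥ 4`, `0 ≤ β < 1 < α` and `0 < r ≤ 2`,
`P_n(α r) - P_n(β r) ≤ (n-2) P_n(r) α^{n-3} (α - β)`. -/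
theorem stmt_15 (n : ℕ) (hn : 4 ≤ n) (α β r : ℝ) (hβ0 : 0 ≤ β) (hβ1 : β < 1) (hα : 1 < α)
    (hr : 0 < r) (hr2 : r ≤ 2) :
    capAreaExt n (α * r) - capAreaExt n (β * r) ≤
      ((n : ℝ) - 2) * capAreaExt n r * α ^ (n - 3) * (α - β) := by
  have hpow := pow_sub_pow_le_mul_pow_mul_sub hβ0 (hβ1.trans hα).le (n - 2)
  rw [Nat.cast_sub (by omega), Nat.cast_two, show n - 2 - 1 = n - 3 by omega] at hpow
  calc capAreaExt n (α * r) - capAreaExt n (β * r)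
      ≤ (α ^ (n - 2) - β ^ (n - 2)) * capAreaExt n r := by
        linarith [capAreaExt_mul_le hn hα.le hr.le hr2,
          pow_mul_capAreaExt_le hn hβ0 hβ1.le hr.le hr2]
    _ ≤ ((n - 2) * α ^ (n - 3) * (α - β)) * capAreaExt n r := by
        gcongr
        exact capAreaExt_nonneg hn hr.le hr2
    _ = ((n : ℝ) - 2) * capAreaExt n r * α ^ (n - 3) * (α - β) := by ring
end

section
/- Let $n \geq 3$, $0 < r < \sqrt{2}$, and let $w_1, w_2$ be points on the unit sphere $S^{n-2} \subset \mathbb{R}^{n-1}$ with $\|w_1 - w_2\|_2 = d$ satisfying $2 - 2\sqrt{1 - (d/2)^2} < r^2$. If $u$ is uniformly distributed on $S^{n-2}$, then $P\big(u \in \operatorname{SC}(r, w_1) \cap \operatorname{SC}(r, w_2)\big) \leq P_n(h(r,d))$ where $h(r,d) = \sqrt{2 - \frac{2 - r^2}{\sqrt{1 - (d/2)^2}}}$. -/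
/-!
On the unit sphere `‖x - w‖² = 2 - 2⟪x, w⟫`, so `x` lies in the cap `SC(r, w)` iff
`⟪x, w⟫ ≥ 1 - r²/2`. Adding the two cap conditions gives `⟪x, w₁ + w₂⟫ ≥ 2 - r²`, and
`‖w₁ + w₂‖ = 2√(1 - (d/2)²)` by the parallelogram law; dividing by it puts `x` in the cap of radius
`h(r, d)` around the spherical midpoint `m = (w₁ + w₂)/‖w₁ + w₂‖`. A reflection carries `w₀` to `m`,
and rotation invariance of `μ` shows that the caps around `m` and `w₀` have the same measure.
-/

open MeasureTheory Metric RealInnerProductSpace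

section UnitSphere

variable {E : Type*} [NormedAddCommGroup E] [InnerProductSpace ℝ E]

lemma norm_sub_sq_eq_two_sub_inner {x y : E} (hx : ‖x‖ = 1) (hy : ‖y‖ = 1) :
    ‖x - y‖ ^ 2 = 2 - 2 * ⟪x, y⟫ := by
  rw [norm_sub_sq_real, hx, hy]
  ring

lemma norm_add_eq_two_mul_sqrt {w₁ w₂ : E} (hw₁ : ‖w₁‖ = 1) (hw₂ : ‖w₂‖ = 1) :
    ‖w₁ + w₂‖ = 2 * √(1 - (‖w₁ - w₂‖ / 2) ^ 2) := by
  have parallelogram : ‖w₁ + w₂‖ ^ 2 + ‖w₁ - w₂‖ ^ 2 = 4 := by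
    rw [norm_add_sq_real, norm_sub_sq_real, hw₁, hw₂]
    ring
  rw [← Real.sqrt_sq (norm_nonneg (w₁ + w₂)), show (2 : ℝ) = √(2 ^ 2) by simp,
    ← Real.sqrt_mul (by norm_num)]
  congr 1
  linarith

lemma norm_sub_midpoint_sq_le {x w₁ w₂ : E} {r : ℝ} (hx : ‖x‖ = 1) (hw₁ : ‖w₁‖ = 1)
    (hw₂ : ‖w₂‖ = 1) (hs : 0 < ‖w₁ + w₂‖) (h₁ : ‖x - w₁‖ ≤ r) (h₂ : ‖x - w₂‖ ≤ r) :
    ‖x - ‖w₁ + w₂‖⁻¹ • (w₁ + w₂)‖ ^ 2 ≤ 2 - 2 * (2 - r ^ 2) / ‖w₁ + w₂‖ := by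
  have hm : ‖‖w₁ + w₂‖⁻¹ • (w₁ + w₂)‖ = 1 := norm_smul_inv_norm (norm_pos_iff.mp hs)
  have hsq₁ := norm_sub_sq_eq_two_sub_inner hx hw₁ ▸ pow_le_pow_left₀ (norm_nonneg _) h₁ 2
  have hsq₂ := norm_sub_sq_eq_two_sub_inner hx hw₂ ▸ pow_le_pow_left₀ (norm_nonneg _) h₂ 2
  have hsum : 2 - r ^ 2 ≤ ⟪x, w₁ + w₂⟫ := by
    rw [inner_add_right]
    linarith
  rw [norm_sub_sq_eq_two_sub_inner hx hm, real_inner_smul_right, mul_div_assoc,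
    div_eq_inv_mul]
  have := mul_le_mul_of_nonneg_left hsum (inv_nonneg.mpr hs.le)
  linarith

lemma sphere_inter_closedBall_inter_closedBall_subset {w₁ w₂ : E} {r : ℝ} (hw₁ : ‖w₁‖ = 1)
    (hw₂ : ‖w₂‖ = 1) (hq : 0 < √(1 - (‖w₁ - w₂‖ / 2) ^ 2)) :
    sphere 0 1 ∩ (closedBall w₁ r ∩ closedBall w₂ r) ⊆
      closedBall (‖w₁ + w₂‖⁻¹ • (w₁ + w₂)) √(2 - (2 - r ^ 2) / √(1 - (‖w₁ - w₂‖ / 2) ^ 2)) := by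
  rintro x ⟨hx, h₁, h₂⟩
  rw [mem_sphere_zero_iff_norm] at hx
  rw [mem_closedBall_iff_norm] at h₁ h₂ ⊢
  have hs := norm_add_eq_two_mul_sqrt hw₁ hw₂
  have hsq := norm_sub_midpoint_sq_le hx hw₁ hw₂ (by linarith) h₁ h₂
  rw [hs, mul_div_mul_left _ _ two_ne_zero, ← hs] at hsq
  exact Real.le_sqrt_of_sq_le hsq

end UnitSphere

lemma MeasureTheory.measure_le_of_ae_mem_of_inter_subset {α : Type*} [MeasurableSpace α]
    {μ : Measure α} {s t u : Set α} (hs : ∀ᵐ x ∂μ, x ∈ s) (h : s ∩ t ⊆ u) : μ t ≤ μ u :=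
  measure_mono_ae (hs.mono fun _ hx ht ↦ h ⟨hx, ht⟩)

lemma MeasureTheory.measure_closedBall_eq_of_norm_eq {E : Type*} [NormedAddCommGroup E]
    [InnerProductSpace ℝ E] [MeasurableSpace E] [BorelSpace E] {μ : Measure E}
    (hμ : ∀ T : E ≃ₗᵢ[ℝ] E, μ.map T = μ) {a b : E} (hab : ‖a‖ = ‖b‖) (ρ : ℝ) :
    μ (closedBall a ρ) = μ (closedBall b ρ) := by
  set T := (ℝ ∙ (a - b))ᗮ.reflection
  have hT : T.symm b = a := T.symm_apply_eq.mpr (Submodule.reflection_sub hab).symm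
  rw [← hT, ← T.preimage_closedBall,
    ← Measure.map_apply T.continuous.measurable measurableSet_closedBall, hμ]

theorem stmt_16_general (n : ℕ)
    (μ : Measure (EuclideanSpace ℝ (Fin (n - 1)))) [IsProbabilityMeasure μ]
    (hinv : ∀ T : EuclideanSpace ℝ (Fin (n - 1)) ≃ₗᵢ[ℝ] EuclideanSpace ℝ (Fin (n - 1)),
      μ.map T = μ)
    (hsupp : μ (Metric.sphere (0 : EuclideanSpace ℝ (Fin (n - 1))) 1) = 1)
    (w₁ w₂ : EuclideanSpace ℝ (Fin (n - 1))) (hw₁ : ‖w₁‖ = 1) (hw₂ : ‖w₂‖ = 1)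
    (r d : ℝ) (hr0 : 0 < r) (hr : r < Real.sqrt 2) (hd : d = ‖w₁ - w₂‖)
    (hcond : 2 - 2 * Real.sqrt (1 - (d / 2) ^ 2) < r ^ 2)
    (w₀ : EuclideanSpace ℝ (Fin (n - 1))) (hw₀ : ‖w₀‖ = 1) :
    μ ({x | ‖x - w₁‖ ≤ r} ∩ {x | ‖x - w₂‖ ≤ r}) ≤
      μ {x | ‖x - w₀‖ ≤ Real.sqrt (2 - (2 - r ^ 2) / Real.sqrt (1 - (d / 2) ^ 2))} := by
  subst hd
  have hr2 : r ^ 2 < 2 := by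
    simpa using pow_lt_pow_left₀ hr hr0.le two_ne_zero
  have hw : ‖w₁ + w₂‖ ≠ 0 := by
    rw [norm_add_eq_two_mul_sqrt hw₁ hw₂]
    linarith
  have on_sphere : ∀ᵐ x ∂μ, x ∈ sphere (0 : EuclideanSpace ℝ (Fin (n - 1))) 1 :=
    (ae_mem_iff_measure_eq isClosed_sphere.nullMeasurableSet).mpr (by simp [hsupp])
  simp only [← mem_closedBall_iff_norm, Set.ofPred_mem_eq]
  calc _ ≤ μ (closedBall (‖w₁ + w₂‖⁻¹ • (w₁ + w₂)) _) :=
        measure_le_of_ae_mem_of_inter_subset on_sphere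
          (sphere_inter_closedBall_inter_closedBall_subset hw₁ hw₂ (by linarith))
    _ = _ := measure_closedBall_eq_of_norm_eq hinv
        ((norm_smul_inv_norm (norm_ne_zero_iff.mp hw)).trans hw₀.symm) _

/-- Lemma: let `μ` be the uniform (rotation-invariant) probability measure on the unit
sphere `S^{n-2} ⊆ ℝ^{n-1}` (`n ≥ 3`). If `w₁, w₂ ∈ S^{n-2}` with `‖w₁ - w₂‖ = d`,
`0 < r < √2` and `2 - 2√(1 - (d/2)²) < r²`, then the measure of the intersection of the
two spherical caps of radius `r` centered at `w₁` and `w₂` is at most the measure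
`P_n(h(r,d))` of a cap of radius `h(r,d) = √(2 - (2 - r²)/√(1 - (d/2)²))` (centered at any
point `w₀` of the sphere). -/
theorem stmt_16 (n : ℕ) (hn : 3 ≤ n)
    (μ : Measure (EuclideanSpace ℝ (Fin (n - 1)))) [IsProbabilityMeasure μ]
    (hinv : ∀ T : EuclideanSpace ℝ (Fin (n - 1)) ≃ₗᵢ[ℝ] EuclideanSpace ℝ (Fin (n - 1)),
      μ.map T = μ)
    (hsupp : μ (Metric.sphere (0 : EuclideanSpace ℝ (Fin (n - 1))) 1) = 1)
    (w₁ w₂ : EuclideanSpace ℝ (Fin (n - 1))) (hw₁ : ‖w₁‖ = 1) (hw₂ : ‖w₂‖ = 1)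
    (r d : ℝ) (hr0 : 0 < r) (hr : r < Real.sqrt 2) (hd : d = ‖w₁ - w₂‖)
    (hcond : 2 - 2 * Real.sqrt (1 - (d / 2) ^ 2) < r ^ 2)
    (w₀ : EuclideanSpace ℝ (Fin (n - 1))) (hw₀ : ‖w₀‖ = 1) :
    μ ({x | ‖x - w₁‖ ≤ r} ∩ {x | ‖x - w₂‖ ≤ r}) ≤
      μ {x | ‖x - w₀‖ ≤ Real.sqrt (2 - (2 - r ^ 2) / Real.sqrt (1 - (d / 2) ^ 2))} :=
  stmt_16_general n μ hinv hsupp w₁ w₂ hw₁ hw₂ r d hr0 hr hd hcond w₀ hw₀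
end

section
/- Let $n \geq 4$, $\delta \geq 2$, and let $\tilde u_1, \dots, \tilde u_\delta$ be i.i.d. uniform random points in the unit ball $B^{n-2} \subset \mathbb{R}^{n-2}$. Then the probability that some vertex of the geometric graph on $\{\tilde u_i\}$ with connection radius $1$ is adjacent to all other vertices is at most $\delta(n-2)\int_0^1 \left(1 - \frac{r^2}{4}\right)^{(n-2)(\delta-1)/2} r^{n-3}\, dr$. -/
/-!
A universal vertex `i` needs all other points in `closedBall (u i) 1`. By the union bound and
Fubini, the probability is at most `δ ∫ ν(closedBall x 1) ^ (δ - 1) dν(x)`. Since the unit ball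
meets `closedBall x 1` inside the ball of radius `√(1 - ‖x‖² / 4)` about `x / 2`,
`ν(closedBall x 1) ≤ (1 - ‖x‖² / 4) ^ ((n - 2) / 2)`, and integrating this radial function in
polar coordinates gives the bound.
-/

open MeasureTheory ProbabilityTheory Metric Set

section Geometry

variable {E : Type*} [NormedAddCommGroup E] [InnerProductSpace ℝ E]

theorem closedBall_zero_inter_closedBall_subset (x : E) :
    closedBall (0 : E) 1 ∩ closedBall x 1 ⊆ closedBall ((2 : ℝ)⁻¹ • x) √(1 - ‖x‖ ^ 2 / 4) := by
  rintro y ⟨hy, hyx⟩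
  rw [mem_closedBall_zero_iff] at hy
  rw [mem_closedBall, dist_eq_norm] at hyx ⊢
  have hpar := parallelogram_law_with_norm ℝ (y - (2 : ℝ)⁻¹ • x) ((2 : ℝ)⁻¹ • x)
  rw [sub_add_cancel, sub_sub, ← add_smul, norm_smul] at hpar
  norm_num at hpar
  refine Real.le_sqrt_of_sq_le ?_
  nlinarith [norm_nonneg y, norm_nonneg (y - x)]

end Geometry

section UniformBall

variable {E : Type*} [NormedAddCommGroup E] [InnerProductSpace ℝ E] [FiniteDimensional ℝ E]
  [MeasurableSpace E] [BorelSpace E] (μ : Measure E) [μ.IsAddHaarMeasure]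

theorem cond_closedBall_closedBall_le {x : E} (hx : ‖x‖ ≤ 2) :
    μ[closedBall x 1 | closedBall 0 1] ≤
      ENNReal.ofReal ((1 - ‖x‖ ^ 2 / 4) ^ ((Module.finrank ℝ E : ℝ) / 2)) := by
  have hB₀ : μ (closedBall 0 1) ≠ 0 := (measure_closedBall_pos μ 0 one_pos).ne'
  have hB : μ (closedBall 0 1) ≠ ⊤ := measure_closedBall_lt_top.ne
  have ha : 0 ≤ 1 - ‖x‖ ^ 2 / 4 := by nlinarith [norm_nonneg x]
  rw [cond_apply measurableSet_closedBall, Real.rpow_div_two_eq_sqrt _ ha, Real.rpow_natCast]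
  calc (μ (closedBall 0 1))⁻¹ * μ (closedBall 0 1 ∩ closedBall x 1)
      ≤ (μ (closedBall 0 1))⁻¹ * μ (closedBall ((2 : ℝ)⁻¹ • x) √(1 - ‖x‖ ^ 2 / 4)) :=
        by gcongr; exact closedBall_zero_inter_closedBall_subset x
    _ = _ := by
        rw [Measure.addHaar_closedBall' μ _ (Real.sqrt_nonneg _), mul_comm (ENNReal.ofReal _),
          ENNReal.inv_mul_cancel_left hB₀ hB]

theorem integral_fun_norm_cond_closedBall [Nontrivial E] (f : ℝ → ℝ) :
    ∫ x, f ‖x‖ ∂μ[|closedBall 0 1] =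
      Module.finrank ℝ E * ∫ r in (0 : ℝ)..1, f r * r ^ (Module.finrank ℝ E - 1) := by
  have hB₀ : μ.real (closedBall 0 1) ≠ 0 :=
    ENNReal.toReal_ne_zero.2
      ⟨(measure_closedBall_pos μ 0 one_pos).ne', measure_closedBall_lt_top.ne⟩
  have hind : ∫ x in closedBall (0 : E) 1, f ‖x‖ ∂μ = ∫ x, (Iic 1).indicator f ‖x‖ ∂μ := by
    rw [← integral_indicator measurableSet_closedBall]
    congr 1 with x
    simp [indicator]
  have hradial : ∫ y in Ioi (0 : ℝ), y ^ (Module.finrank ℝ E - 1) • (Iic 1).indicator f y =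
      ∫ r in (0 : ℝ)..1, f r * r ^ (Module.finrank ℝ E - 1) := by
    have : ∀ y : ℝ, y ^ (Module.finrank ℝ E - 1) • (Iic 1).indicator f y =
        (Iic 1).indicator (fun r => f r * r ^ (Module.finrank ℝ E - 1)) y := fun y => by
      by_cases hy : y ∈ Iic 1 <;> simp [hy, mul_comm]
    simp_rw [this]
    rw [setIntegral_indicator measurableSet_Iic, Ioi_inter_Iic,
      intervalIntegral.integral_of_le zero_le_one]
  rw [ProbabilityTheory.cond, integral_smul_measure, hind, integral_fun_norm_addHaar, hradial,
    ← Measure.addHaar_real_closedBall_eq_addHaar_real_ball, ENNReal.toReal_inv, ← measureReal_def,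
    nsmul_eq_mul, smul_eq_mul, smul_eq_mul]
  field_simp

theorem lintegral_cond_closedBall_pow_le [Nontrivial E] (m : ℕ) :
    ∫⁻ x, μ[closedBall x 1 | closedBall 0 1] ^ m ∂μ[|closedBall 0 1] ≤
      ENNReal.ofReal (Module.finrank ℝ E * ∫ r in (0 : ℝ)..1,
        (1 - r ^ 2 / 4) ^ ((Module.finrank ℝ E : ℝ) * m / 2) * r ^ (Module.finrank ℝ E - 1)) := by
  set B := closedBall (0 : E) 1
  set p : ℝ := (Module.finrank ℝ E : ℝ) * m / 2
  have hp : 0 ≤ p := by positivity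
  have hB₀ : μ B ≠ 0 := (measure_closedBall_pos μ 0 one_pos).ne'
  have hnonneg : ∀ x ∈ B, 0 ≤ 1 - ‖x‖ ^ 2 / 4 := fun x hx => by
    nlinarith [norm_nonneg x, mem_closedBall_zero_iff.1 hx]
  have hint : Integrable (fun x : E => (1 - ‖x‖ ^ 2 / 4) ^ p) μ[|B] :=
    ((Continuous.rpow_const (by fun_prop) fun _ => Or.inr hp).continuousOn.integrableOn_compact
      (isCompact_closedBall 0 1)).smul_measure (ENNReal.inv_ne_top.2 hB₀)
  calc ∫⁻ x, μ[closedBall x 1 | B] ^ m ∂μ[|B]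
      ≤ ∫⁻ x, ENNReal.ofReal ((1 - ‖x‖ ^ 2 / 4) ^ p) ∂μ[|B] := by
        refine lintegral_mono_ae ((ae_cond_mem measurableSet_closedBall).mono fun x hx => ?_)
        have hx2 : ‖x‖ ≤ 2 := by linarith [mem_closedBall_zero_iff.1 hx]
        calc μ[closedBall x 1 | B] ^ m
            ≤ ENNReal.ofReal ((1 - ‖x‖ ^ 2 / 4) ^ ((Module.finrank ℝ E : ℝ) / 2)) ^ m := by
              gcongr; exact cond_closedBall_closedBall_le μ hx2
          _ = ENNReal.ofReal ((1 - ‖x‖ ^ 2 / 4) ^ p) := by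
              rw [← ENNReal.ofReal_pow (Real.rpow_nonneg (hnonneg x hx) _),
                ← Real.rpow_mul_natCast (hnonneg x hx), div_mul_eq_mul_div]
    _ = ENNReal.ofReal (∫ x, (1 - ‖x‖ ^ 2 / 4) ^ p ∂μ[|B]) :=
        (ofReal_integral_eq_lintegral_ofReal hint ((ae_cond_mem measurableSet_closedBall).mono
          fun x hx => Real.rpow_nonneg (hnonneg x hx) p)).symm
    _ = _ := by rw [integral_fun_norm_cond_closedBall μ fun r => (1 - r ^ 2 / 4) ^ p]

end UniformBall

section Product

variable {α : Type*} [PseudoMetricSpace α] [MeasurableSpace α] [OpensMeasurableSpace α]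
  [SecondCountableTopology α] (ν : Measure α) [SigmaFinite ν] {m : ℕ} (r : ℝ)

theorem measure_pi_forall_ne_dist_le_eq_lintegral (i : Fin (m + 1)) :
    Measure.pi (fun _ : Fin (m + 1) => ν) {u | ∀ j ≠ i, dist (u i) (u j) ≤ r} =
      ∫⁻ x, ν (closedBall x r) ^ m ∂ν := by
  set S : Set (α × (Fin m → α)) := {q | ∀ j, q.2 j ∈ closedBall q.1 r}
  have hS : MeasurableSet S := by
    simp only [S, mem_closedBall, ofPred_forall]
    exact .iInter fun j => measurableSet_le (by fun_prop) measurable_const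
  have hpre : {u : Fin (m + 1) → α | ∀ j ≠ i, dist (u i) (u j) ≤ r} =
      MeasurableEquiv.piFinSuccAbove (fun _ => α) i ⁻¹' S := by
    ext u
    simp only [S, mem_ofPred_eq, mem_preimage, MeasurableEquiv.piFinSuccAbove_apply,
      mem_closedBall]
    exact ⟨fun h j => (dist_comm _ _).trans_le (h _ (Fin.succAbove_ne i j)), fun h j hj => by
      obtain ⟨k, rfl⟩ := Fin.exists_succAbove_eq hj; exact (dist_comm _ _).trans_le (h k)⟩
  rw [hpre, (measurePreserving_piFinSuccAbove (fun _ => ν) i).measure_preimage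
    hS.nullMeasurableSet, Measure.prod_apply hS]
  congr 1 with x
  have : Prod.mk x ⁻¹' S = univ.pi fun _ : Fin m => closedBall x r := by ext; simp [S]
  simp [this, Measure.pi_pi]

theorem measure_pi_exists_forall_ne_dist_le_le_lintegral :
    Measure.pi (fun _ : Fin (m + 1) => ν) {u | ∃ i, ∀ j ≠ i, dist (u i) (u j) ≤ r} ≤
      (m + 1) * ∫⁻ x, ν (closedBall x r) ^ m ∂ν := by
  rw [ofPred_exists]
  refine (measure_iUnion_fintype_le _ _).trans_eq ?_
  simp [measure_pi_forall_ne_dist_le_eq_lintegral]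

end Product

theorem stmt_19_general (n δ : ℕ) (hn : 4 ≤ n) (hδ : 2 ≤ δ)
    (ν : Measure (EuclideanSpace ℝ (Fin (n - 2))))
    (hν : ν = ProbabilityTheory.cond volume
      (Metric.closedBall (0 : EuclideanSpace ℝ (Fin (n - 2))) 1)) :
    (Measure.pi (fun _ : Fin δ => ν)
        {u | ∃ i, ∀ j, j ≠ i → dist (u i) (u j) ≤ 1}).toReal ≤
      (δ : ℝ) * ((n : ℝ) - 2) *
        ∫ r in (0 : ℝ)..1,
          (1 - r ^ 2 / 4) ^ ((((n : ℝ) - 2) * ((δ : ℝ) - 1)) / 2) * r ^ (n - 3) := by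
  obtain ⟨m, rfl⟩ : ∃ m, δ = m + 1 := ⟨δ - 1, by omega⟩
  subst hν
  have hd : Module.finrank ℝ (EuclideanSpace ℝ (Fin (n - 2))) = n - 2 := finrank_euclideanSpace_fin
  have : Nontrivial (EuclideanSpace ℝ (Fin (n - 2))) :=
    Module.nontrivial_of_finrank_pos (R := ℝ) (by omega)
  have hcast : ((n - 2 : ℕ) : ℝ) = n - 2 := by rw [Nat.cast_sub (by omega)]; norm_num
  have hbound := (measure_pi_exists_forall_ne_dist_le_le_lintegral _ 1).trans <|
    mul_le_mul_right
      (lintegral_cond_closedBall_pow_le (volume : Measure (EuclideanSpace ℝ (Fin (n - 2)))) m) _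
  rw [hd, hcast, show n - 2 - 1 = n - 3 by omega] at hbound
  have hI : 0 ≤ ∫ r in (0 : ℝ)..1, (1 - r ^ 2 / 4) ^ (((n : ℝ) - 2) * m / 2) * r ^ (n - 3) :=
    intervalIntegral.integral_nonneg zero_le_one fun r ⟨hr₀, hr₁⟩ =>
      mul_nonneg (Real.rpow_nonneg (by nlinarith) _) (pow_nonneg hr₀ _)
  have hn2 : (0 : ℝ) ≤ n - 2 := by rw [← hcast]; positivity
  push_cast
  simp only [add_sub_cancel_right]
  refine ENNReal.toReal_le_of_le_ofReal (mul_nonneg (mul_nonneg (by positivity) hn2) hI)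
    (hbound.trans_eq ?_)
  rw [mul_assoc, ENNReal.ofReal_mul (p := (m : ℝ) + 1) (by positivity),
    ENNReal.ofReal_add (by positivity) zero_le_one, ENNReal.ofReal_natCast, ENNReal.ofReal_one]

/-- Lemma: let `n ≥ 4`, `δ ≥ 2`, and let `ũ₁, …, ũ_δ` be i.i.d. uniform points in the unit
ball `B^{n-2} ⊆ ℝ^{n-2}` (modeled by the product of `δ` copies of the normalized Lebesgue
measure on the closed unit ball). Then the probability that the geometric graph on the
`ũᵢ` with connection radius `1` has a universal vertex (a vertex within distance `1` of all
the others) is at most `δ (n-2) ∫₀¹ (1 - r²/4)^{(n-2)(δ-1)/2} r^{n-3} dr`. -/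
theorem stmt_19 (n δ : ℕ) (hn : 4 ≤ n) (hδ : 2 ≤ δ)
    (ν : Measure (EuclideanSpace ℝ (Fin (n - 2)))) [IsProbabilityMeasure ν]
    (hν : ν = ProbabilityTheory.cond volume
      (Metric.closedBall (0 : EuclideanSpace ℝ (Fin (n - 2))) 1)) :
    (Measure.pi (fun _ : Fin δ => ν)
        {u | ∃ i, ∀ j, j ≠ i → dist (u i) (u j) ≤ 1}).toReal ≤
      (δ : ℝ) * ((n : ℝ) - 2) *
        ∫ r in (0 : ℝ)..1,
          (1 - r ^ 2 / 4) ^ ((((n : ℝ) - 2) * ((δ : ℝ) - 1)) / 2) * r ^ (n - 3) :=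
  stmt_19_general n δ hn hδ ν hν
end
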